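/- Let C be an abelian category and A the heart category of complexes [A \to B \to C] with first map injective and exact at the middle. Let \phi : [A \to B \xrightarrow{f} C] \to [A' \to B' \xrightarrow{f'} C'] be a morphism in A. Then \phi is a monomorphism in A if and only if the induced map \bar\phi_C : C/Im f \to C'/Im f' is injective and the canonical injection A \to B \oplus Ker f', a \mapsto (a, -\phi_B(a)), splits. -/

import Mathlib

open CategoryTheory Limits

namespace ARHeart

variable (C : Type*) [Category C] [Abelian C]

/-- Objects of the heart `𝒜`: complexes `[A ⟶ B ⟶ Z]` in degrees `-2, -1, 0`
with the first map a monomorphism and `Ker g = Im f`. -/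
structure Obj : Type _ where
  A : C
  B : C
  Z : C
  f : A ⟶ B
  g : B ⟶ Z
  w : f ≫ g = 0
  mono : Mono f
  exact : (ShortComplex.mk f g w).Exact

variable {C}

/-- Chain maps between heart objects. -/
@[ext]
structure Hom (V W : Obj C) where
  a : V.A ⟶ W.A
  b : V.B ⟶ W.B
  c : V.Z ⟶ W.Z
  comm₁ : V.f ≫ b = a ≫ W.f
  comm₂ : V.g ≫ c = b ≫ W.g

namespace Hom

variable {U V W : Obj C}

instance : Zero (Hom V W) := ⟨⟨0, 0, 0, by simp, by simp⟩⟩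
instance : Add (Hom V W) :=
  ⟨fun φ ψ => ⟨φ.a + ψ.a, φ.b + ψ.b, φ.c + ψ.c,
    by simp [Preadditive.comp_add, Preadditive.add_comp, φ.comm₁, ψ.comm₁],
    by simp [Preadditive.comp_add, Preadditive.add_comp, φ.comm₂, ψ.comm₂]⟩⟩
instance : Neg (Hom V W) :=
  ⟨fun φ => ⟨-φ.a, -φ.b, -φ.c,
    by simp [φ.comm₁], by simp [φ.comm₂]⟩⟩
instance : Sub (Hom V W) :=
  ⟨fun φ ψ => ⟨φ.a - ψ.a, φ.b - ψ.b, φ.c - ψ.c,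
    by simp [Preadditive.comp_sub, Preadditive.sub_comp, φ.comm₁, ψ.comm₁],
    by simp [Preadditive.comp_sub, Preadditive.sub_comp, φ.comm₂, ψ.comm₂]⟩⟩
instance : SMul ℕ (Hom V W) :=
  ⟨fun n φ => ⟨n • φ.a, n • φ.b, n • φ.c,
    by simp [φ.comm₁], by simp [φ.comm₂]⟩⟩
instance : SMul ℤ (Hom V W) :=
  ⟨fun n φ => ⟨n • φ.a, n • φ.b, n • φ.c,
    by simp [φ.comm₁], by simp [φ.comm₂]⟩⟩

@[simp] lemma add_a (φ ψ : Hom V W) : (φ + ψ).a = φ.a + ψ.a := rfl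
@[simp] lemma add_b (φ ψ : Hom V W) : (φ + ψ).b = φ.b + ψ.b := rfl
@[simp] lemma add_c (φ ψ : Hom V W) : (φ + ψ).c = φ.c + ψ.c := rfl
@[simp] lemma sub_a (φ ψ : Hom V W) : (φ - ψ).a = φ.a - ψ.a := rfl
@[simp] lemma sub_b (φ ψ : Hom V W) : (φ - ψ).b = φ.b - ψ.b := rfl
@[simp] lemma sub_c (φ ψ : Hom V W) : (φ - ψ).c = φ.c - ψ.c := rfl
@[simp] lemma neg_a (φ : Hom V W) : (-φ).a = -φ.a := rfl
@[simp] lemma neg_b (φ : Hom V W) : (-φ).b = -φ.b := rfl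
@[simp] lemma neg_c (φ : Hom V W) : (-φ).c = -φ.c := rfl
@[simp] lemma zero_a : (0 : Hom V W).a = 0 := rfl
@[simp] lemma zero_b : (0 : Hom V W).b = 0 := rfl
@[simp] lemma zero_c : (0 : Hom V W).c = 0 := rfl

instance : AddCommGroup (Hom V W) :=
  Function.Injective.addCommGroup
    (fun φ => (φ.a, φ.b, φ.c))
    (fun φ ψ h => by
      ext <;> simp only [Prod.mk.injEq] at h <;> tauto)
    rfl (fun _ _ => rfl) (fun _ => rfl) (fun _ _ => rfl) (fun _ _ => rfl) (fun _ _ => rfl)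

/-- Identity chain map. -/
def id (V : Obj C) : Hom V V := ⟨𝟙 _, 𝟙 _, 𝟙 _, by simp, by simp⟩

/-- Composition of chain maps. -/
def comp (φ : Hom U V) (ψ : Hom V W) : Hom U W :=
  ⟨φ.a ≫ ψ.a, φ.b ≫ ψ.b, φ.c ≫ ψ.c,
    by rw [← Category.assoc, φ.comm₁, Category.assoc, ψ.comm₁, Category.assoc],
    by rw [← Category.assoc, φ.comm₂, Category.assoc, ψ.comm₂, Category.assoc]⟩

@[simp] lemma comp_a (φ : Hom U V) (ψ : Hom V W) : (φ.comp ψ).a = φ.a ≫ ψ.a := rfl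
@[simp] lemma comp_b (φ : Hom U V) (ψ : Hom V W) : (φ.comp ψ).b = φ.b ≫ ψ.b := rfl
@[simp] lemma comp_c (φ : Hom U V) (ψ : Hom V W) : (φ.comp ψ).c = φ.c ≫ ψ.c := rfl

lemma sub_comp (φ φ' : Hom U V) (ψ : Hom V W) :
    (φ - φ').comp ψ = φ.comp ψ - φ'.comp ψ := by
  ext <;> simp [Preadditive.sub_comp]

lemma comp_sub (φ : Hom U V) (ψ ψ' : Hom V W) :
    φ.comp (ψ - ψ') = φ.comp ψ - φ.comp ψ' := by
  ext <;> simp [Preadditive.comp_sub]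

lemma add_comp (φ φ' : Hom U V) (ψ : Hom V W) :
    (φ + φ').comp ψ = φ.comp ψ + φ'.comp ψ := by
  ext <;> simp [Preadditive.add_comp]

lemma comp_add (φ : Hom U V) (ψ ψ' : Hom V W) :
    φ.comp (ψ + ψ') = φ.comp ψ + φ.comp ψ' := by
  ext <;> simp [Preadditive.comp_add]

end Hom

/-- The subgroup of chain maps homotopic to zero. -/
def nullHomotopic (V W : Obj C) : AddSubgroup (Hom V W) where
  carrier := {χ | ∃ (s₁ : V.B ⟶ W.A) (s₀ : V.Z ⟶ W.B),
    χ.a = V.f ≫ s₁ ∧ χ.b = V.g ≫ s₀ + s₁ ≫ W.f ∧ χ.c = s₀ ≫ W.g}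
  add_mem' := by
    rintro χ χ' ⟨s₁, s₀, h1, h2, h3⟩ ⟨t₁, t₀, h1', h2', h3'⟩
    exact ⟨s₁ + t₁, s₀ + t₀, by
      simp [h1, h1', Preadditive.comp_add], by
      simp only [Hom.add_b, h2, h2', Preadditive.comp_add, Preadditive.add_comp]
      abel, by simp [h3, h3', Preadditive.add_comp]⟩
  zero_mem' := ⟨0, 0, by simp, by simp, by simp⟩
  neg_mem' := by
    rintro χ ⟨s₁, s₀, h1, h2, h3⟩
    exact ⟨-s₁, -s₀, by simp [h1], by simp [h2]; abel, by simp [h3]⟩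

lemma comp_null {U V W : Obj C} (χ : Hom U V) (ψ : Hom V W)
    (h : χ ∈ nullHomotopic U V) : χ.comp ψ ∈ nullHomotopic U W := by
  obtain ⟨s₁, s₀, h1, h2, h3⟩ := h
  refine ⟨s₁ ≫ ψ.a, s₀ ≫ ψ.b, ?_, ?_, ?_⟩
  · simp [h1]
  · simp only [Hom.comp_b, h2, Preadditive.add_comp, Category.assoc, ψ.comm₁]
  · simp only [Hom.comp_c, h3, Category.assoc, ψ.comm₂]

lemma null_comp {U V W : Obj C} (φ : Hom U V) (χ : Hom V W)
    (h : χ ∈ nullHomotopic V W) : φ.comp χ ∈ nullHomotopic U W := by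
  obtain ⟨s₁, s₀, h1, h2, h3⟩ := h
  refine ⟨φ.b ≫ s₁, φ.c ≫ s₀, ?_, ?_, ?_⟩
  · simp only [Hom.comp_a, h1, ← Category.assoc, φ.comm₁]
  · simp only [Hom.comp_b, h2, Preadditive.comp_add, ← Category.assoc, φ.comm₂]
  · simp [h3]

instance instCategory : Category (Obj C) where
  Hom V W := Hom V W ⧸ nullHomotopic V W
  id V := QuotientAddGroup.mk (Hom.id V)
  comp := Quotient.map₂ Hom.comp (by
    intro φ φ' hφ ψ ψ' hψ
    replace hφ := QuotientAddGroup.leftRel_apply.mp hφ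
    replace hψ := QuotientAddGroup.leftRel_apply.mp hψ
    refine QuotientAddGroup.leftRel_apply.mpr ?_
    have : -φ.comp ψ + φ'.comp ψ' = (-φ + φ').comp ψ' + φ.comp (-ψ + ψ') := by
      refine Hom.ext ?_ ?_ ?_ <;>
        simp [Hom.comp, Preadditive.add_comp, Preadditive.comp_add,
          Preadditive.neg_comp, Preadditive.comp_neg] <;> abel
    rw [this]
    exact AddSubgroup.add_mem _ (comp_null _ _ hφ) (null_comp _ _ hψ))
  id_comp := by
    rintro V W ⟨φ⟩
    exact congrArg (QuotientAddGroup.mk)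
      (Hom.ext (by simp [Hom.comp, Hom.id]) (by simp [Hom.comp, Hom.id])
        (by simp [Hom.comp, Hom.id]))
  comp_id := by
    rintro V W ⟨φ⟩
    exact congrArg (QuotientAddGroup.mk)
      (Hom.ext (by simp [Hom.comp, Hom.id]) (by simp [Hom.comp, Hom.id])
        (by simp [Hom.comp, Hom.id]))
  assoc := by
    rintro U V W X ⟨φ⟩ ⟨ψ⟩ ⟨ρ⟩
    exact congrArg (QuotientAddGroup.mk)
      (Hom.ext (by simp [Hom.comp]) (by simp [Hom.comp]) (by simp [Hom.comp]))

/-- The homotopy class of a chain map, as a morphism in the heart. -/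
def mkHom {V W : Obj C} (φ : Hom V W) : V ⟶ W := QuotientAddGroup.mk φ

lemma mkHom_surjective {V W : Obj C} : Function.Surjective (mkHom (V := V) (W := W)) :=
  fun q => Quotient.inductionOn q (fun φ => ⟨φ, rfl⟩)

@[simp] lemma mkHom_comp {U V W : Obj C} (φ : Hom U V) (ψ : Hom V W) :
    mkHom φ ≫ mkHom ψ = mkHom (φ.comp ψ) := rfl

instance homAddCommGroup (V W : Obj C) : AddCommGroup (V ⟶ W) :=
  inferInstanceAs (AddCommGroup (Hom V W ⧸ nullHomotopic V W))

lemma mkHom_add {V W : Obj C} (φ ψ : Hom V W) :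
    (mkHom (φ + ψ) : V ⟶ W) = mkHom φ + mkHom ψ := rfl

instance : Preadditive (Obj C) where
  homGroup := homAddCommGroup
  add_comp := by
    rintro U V W ⟨φ⟩ ⟨φ'⟩ ⟨ψ⟩
    show mkHom ((φ + φ').comp ψ) = mkHom ((φ.comp ψ) + (φ'.comp ψ))
    rw [Hom.add_comp]
  comp_add := by
    rintro U V W ⟨φ⟩ ⟨ψ⟩ ⟨ψ'⟩
    show mkHom (φ.comp (ψ + ψ')) = mkHom ((φ.comp ψ) + (φ.comp ψ'))
    rw [Hom.comp_add]

open ZeroObject in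
/-- The object `P_X = [0 ⟶ 0 ⟶ X]`. -/
noncomputable def P (X : C) : Obj C where
  A := 0
  B := 0
  Z := X
  f := 0
  g := 0
  w := by simp
  mono := by infer_instance
  exact := ShortComplex.exact_of_isZero_X₂ _ (isZero_zero C)

/-- The functor `P : C ⥤ 𝒜`, `X ↦ [0 ⟶ 0 ⟶ X]`. -/
noncomputable def Pfunctor : C ⥤ Obj C where
  obj := P
  map {X Y} u := mkHom ⟨0, 0, u, by simp [P]; rfl, by simp [P]; exact (comp_zero (C := C)).symm⟩
  map_id X := congrArg QuotientAddGroup.mk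
    (Hom.ext (by simp [Hom.id, P]; rfl) (by simp [Hom.id, P]; rfl) (by simp [Hom.id, P]))
  map_comp {X Y Z} u v := congrArg QuotientAddGroup.mk
    (Hom.ext (by simp [Hom.comp]) (by simp [Hom.comp]) (by simp [Hom.comp]; rfl))

/-- The heart object `[Ker g ⟶ B ⟶ Z]` associated to a morphism `g : B ⟶ Z`. -/
noncomputable def kernelObj {B Z : C} (g : B ⟶ Z) : Obj C where
  A := kernel g
  B := B
  Z := Z
  f := kernel.ι g
  g := g
  w := kernel.condition g
  mono := inferInstance
  exact := ShortComplex.exact_of_f_is_kernel _ (kernelIsKernel g)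

end ARHeart


namespace ARHeart

variable {C : Type*} [Category C] [Abelian C]

lemma mkHom_eq_zero_iff {V W : Obj C} (φ : Hom V W) :
    mkHom φ = (0 : V ⟶ W) ↔ φ ∈ nullHomotopic V W :=
  QuotientAddGroup.eq_zero_iff φ

end ARHeart

open CategoryTheory Limits ARHeart in
/-- a morphism `φ : [A ⟶ B —f→ C] ⟶ [A' ⟶ B' —f'→ C']` of the heart is a
monomorphism iff the induced map `C/Im f ⟶ C'/Im f'` is a monomorphism and the
canonical injection `A ⟶ B ⊕ Ker f'`, `a ↦ (a, -φ_B(a))`, splits. -/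
theorem stmt8 {C : Type*} [Category C] [Abelian C] {V W : ARHeart.Obj C}
    (φ : ARHeart.Hom V W) :
    Mono (ARHeart.mkHom φ) ↔
      (Mono (cokernel.map V.g W.g φ.b φ.c φ.comm₂) ∧
        ∃ r : (V.B ⊞ kernel W.g) ⟶ V.A,
          biprod.lift V.f (-(kernel.lift W.g (V.f ≫ φ.b)
            (by rw [Category.assoc, ← φ.comm₂, ← Category.assoc, V.w, Limits.zero_comp])))
            ≫ r = 𝟙 V.A) := by
  haveI := V.mono
  haveI := W.mono
  haveI hVf : Mono (ShortComplex.mk V.f V.g V.w).f := V.mono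
  haveI hWf : Mono (ShortComplex.mk W.f W.g W.w).f := W.mono
  constructor
  · intro hmono
    constructor
    · -- the induced map on cokernels is a monomorphism
      apply Preadditive.mono_of_cancel_zero
      intro T t ht
      have hπmap : cokernel.π V.g ≫ cokernel.map V.g W.g φ.b φ.c φ.comm₂ =
          φ.c ≫ cokernel.π W.g := cokernel.π_desc _ _ _
      have hc₀ : (pullback.fst (cokernel.π V.g) t ≫ φ.c) ≫ cokernel.π W.g = 0 := by
        rw [Category.assoc, ← hπmap, ← Category.assoc, pullback.condition,
          Category.assoc, ht, comp_zero]
      set c₀' : pullback (cokernel.π V.g) t ⟶ Abelian.image W.g :=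
        kernel.lift (cokernel.π W.g) (pullback.fst (cokernel.π V.g) t ≫ φ.c) hc₀ with hc₀'
      have hEcond : pullback.fst (Abelian.factorThruImage W.g) c₀' ≫ W.g =
          pullback.snd (Abelian.factorThruImage W.g) c₀' ≫
            (pullback.fst (cokernel.π V.g) t ≫ φ.c) := by
        have h0 := pullback.condition (f := Abelian.factorThruImage W.g) (g := c₀')
        have h2 := congrArg (· ≫ Abelian.image.ι W.g) h0
        simp only [Category.assoc] at h2
        rw [Abelian.image.fac] at h2
        have hcι : c₀' ≫ Abelian.image.ι W.g = pullback.fst (cokernel.π V.g) t ≫ φ.c :=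
          kernel.lift_ι _ _ _
        rw [h2, hcι]
      let cψ := pullback.snd (Abelian.factorThruImage W.g) c₀' ≫
        pullback.fst (cokernel.π V.g) t
      let ψ : Hom (P (pullback (Abelian.factorThruImage W.g) c₀')) V :=
        ⟨0, 0, cψ, by rw [comp_zero, zero_comp], by rw [zero_comp]; exact zero_comp⟩
      have hnull : mkHom ψ ≫ mkHom φ = 0 := by
        rw [mkHom_comp]
        refine (mkHom_eq_zero_iff _).mpr
          ⟨0, pullback.fst (Abelian.factorThruImage W.g) c₀', ?_, ?_, ?_⟩
        · show (0 : (P (pullback (Abelian.factorThruImage W.g) c₀')).A ⟶ V.A) ≫ φ.a = (P _).f ≫ 0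
          rw [zero_comp, comp_zero]
        · show (0 : (P (pullback (Abelian.factorThruImage W.g) c₀')).B ⟶ V.B) ≫ φ.b =
            (0 : (P (pullback (Abelian.factorThruImage W.g) c₀')).B ⟶ (P _).Z) ≫ _ + 0 ≫ W.f
          rw [zero_comp]
          exact (add_zero (0 : (P (pullback (Abelian.factorThruImage W.g) c₀')).B ⟶ W.B)).symm.trans
            (congrArg₂ (· + ·) zero_comp.symm zero_comp.symm)
        · show cψ ≫ φ.c = pullback.fst (Abelian.factorThruImage W.g) c₀' ≫ W.g
          rw [hEcond]
          simp [cψ]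
      haveI := hmono
      have hψ0 : mkHom ψ = 0 := zero_of_comp_mono _ hnull
      obtain ⟨s₁', s₀', -, -, h3'⟩ := (mkHom_eq_zero_iff ψ).mp hψ0
      have h3c : cψ = (show pullback (Abelian.factorThruImage W.g) c₀' ⟶ V.B from s₀') ≫ V.g := h3'
      haveI : Epi (pullback.snd (Abelian.factorThruImage W.g) c₀') := inferInstance
      haveI : Epi (pullback.snd (cokernel.π V.g) t) := inferInstance
      apply zero_of_epi_comp (pullback.snd (Abelian.factorThruImage W.g) c₀' ≫
        pullback.snd (cokernel.π V.g) t)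
      rw [Category.assoc, ← pullback.condition, ← Category.assoc]
      show cψ ≫ cokernel.π V.g = 0
      rw [h3c, Category.assoc, cokernel.condition, comp_zero]
    · -- the canonical injection splits
      haveI hd : Mono (biprod.lift V.f (-φ.a)) := mono_of_mono_fac (biprod.lift_fst _ _)
      let U₁ : Obj C :=
        ⟨V.A, V.B ⊞ W.A, cokernel (biprod.lift V.f (-φ.a)), biprod.lift V.f (-φ.a),
          cokernel.π _, cokernel.condition _, hd,
          ShortComplex.exact_of_g_is_cokernel _ (cokernelIsCokernel _)⟩
      let ψ₁ : Hom U₁ V :=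
        ⟨𝟙 V.A, biprod.fst,
          cokernel.desc (biprod.lift V.f (-φ.a)) (biprod.fst ≫ V.g)
            (by rw [← Category.assoc, biprod.lift_fst, V.w]),
          by show biprod.lift V.f (-φ.a) ≫ biprod.fst = 𝟙 V.A ≫ V.f; simp,
          by show cokernel.π _ ≫ cokernel.desc _ _ _ = biprod.fst ≫ V.g; simp⟩
      have hs₀cond : biprod.lift V.f (-φ.a) ≫ (biprod.fst ≫ φ.b + biprod.snd ≫ W.f) = 0 := by
        simp [Preadditive.comp_add, φ.comm₁]
      have hnull : mkHom ψ₁ ≫ mkHom φ = 0 := by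
        rw [mkHom_comp]
        refine (mkHom_eq_zero_iff _).mpr
          ⟨-biprod.snd, cokernel.desc (biprod.lift V.f (-φ.a))
            (biprod.fst ≫ φ.b + biprod.snd ≫ W.f) hs₀cond, ?_, ?_, ?_⟩
        · show 𝟙 V.A ≫ φ.a = biprod.lift V.f (-φ.a) ≫ (-biprod.snd)
          simp
        · show biprod.fst ≫ φ.b = cokernel.π _ ≫ cokernel.desc _ _ _ + (-biprod.snd) ≫ W.f
          simp
        · show (cokernel.desc (biprod.lift V.f (-φ.a)) (biprod.fst ≫ V.g) _) ≫ φ.c =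
            cokernel.desc _ _ hs₀cond ≫ W.g
          rw [← cancel_epi (cokernel.π (biprod.lift V.f (-φ.a)))]
          simp [Preadditive.add_comp, φ.comm₂, W.w]
      haveI := hmono
      have hψ0 : mkHom ψ₁ = 0 := zero_of_comp_mono _ hnull
      obtain ⟨S₁, S₀, hS1, -, -⟩ := (mkHom_eq_zero_iff ψ₁).mp hψ0
      have hS1' : 𝟙 V.A = biprod.lift V.f (-φ.a) ≫ S₁ := hS1
      let ρ' : kernel W.g ⟶ W.A := W.exact.lift (kernel.ι W.g) (kernel.condition W.g)
      have hρ' : ρ' ≫ W.f = kernel.ι W.g := W.exact.lift_f _ _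
      have hkρ : kernel.lift W.g (V.f ≫ φ.b)
          (by rw [Category.assoc, ← φ.comm₂, ← Category.assoc, V.w, Limits.zero_comp]) ≫ ρ' =
          φ.a := by
        rw [← cancel_mono W.f, Category.assoc, hρ', kernel.lift_ι, φ.comm₁]
      refine ⟨biprod.desc (biprod.inl ≫ S₁) (ρ' ≫ biprod.inr ≫ S₁), ?_⟩
      rw [biprod.lift_desc]
      have : (-(kernel.lift W.g (V.f ≫ φ.b)
          (by rw [Category.assoc, ← φ.comm₂, ← Category.assoc, V.w, Limits.zero_comp]))) ≫
          (ρ' ≫ biprod.inr ≫ S₁) = (-φ.a) ≫ (biprod.inr ≫ S₁) := by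
        rw [Preadditive.neg_comp, Preadditive.neg_comp, ← Category.assoc, hkρ]
      rw [this, ← Category.assoc, ← Category.assoc, ← Preadditive.add_comp, ← biprod.lift_eq,
        ← hS1']
  · rintro ⟨hcok, r, hr⟩
    apply Preadditive.mono_of_cancel_zero
    intro U ψq hψq
    obtain ⟨ψ, rfl⟩ := mkHom_surjective ψq
    rw [mkHom_comp] at hψq
    obtain ⟨s₁, s₀, h1, h2, h3⟩ := (mkHom_eq_zero_iff _).mp hψq
    simp only [Hom.comp_a, Hom.comp_b, Hom.comp_c] at h1 h2 h3
    -- the map on cokernels kills ψ.c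
    have hcπ : ψ.c ≫ cokernel.π V.g = 0 := by
      rw [← cancel_mono (cokernel.map V.g W.g φ.b φ.c φ.comm₂), zero_comp, Category.assoc,
        cokernel.π_desc, ← Category.assoc, h3, Category.assoc, cokernel.condition, comp_zero]
    -- the canonical map into the biproduct
    have hℓcond : (s₁ ≫ W.f) ≫ W.g = 0 := by rw [Category.assoc, W.w, comp_zero]
    set k : V.A ⟶ kernel W.g := kernel.lift W.g (V.f ≫ φ.b)
      (by rw [Category.assoc, ← φ.comm₂, ← Category.assoc, V.w, Limits.zero_comp]) with hk
    set ℓ : U.B ⟶ kernel W.g := kernel.lift W.g (s₁ ≫ W.f) hℓcond with hℓ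
    set q : U.B ⟶ V.B ⊞ kernel W.g := biprod.lift ψ.b (-ℓ) with hq
    set t₁ : U.B ⟶ V.A := q ≫ r with ht₁def
    have hfq : U.f ≫ q = ψ.a ≫ biprod.lift V.f (-k) := by
      apply biprod.hom_ext
      · simp [hq, ψ.comm₁]
      · rw [← cancel_mono (kernel.ι W.g)]
        simp only [hq, Category.assoc, biprod.lift_snd, Preadditive.comp_neg,
          Preadditive.neg_comp, hℓ, hk, kernel.lift_ι]
        rw [← Category.assoc, ← h1, Category.assoc, ← φ.comm₁, ← Category.assoc]
    have ht₁ : U.f ≫ t₁ = ψ.a := by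
      rw [ht₁def, ← Category.assoc, hfq, Category.assoc, hr, Category.comp_id]
    -- the pullback D
    set c'' : U.Z ⟶ Abelian.image V.g := kernel.lift (cokernel.π V.g) ψ.c hcπ with hc''
    set p₁ := pullback.fst (Abelian.factorThruImage V.g) c'' with hp₁
    set p₂ := pullback.snd (Abelian.factorThruImage V.g) c'' with hp₂
    haveI : Epi p₂ := by rw [hp₂]; infer_instance
    have hpg : p₁ ≫ V.g = p₂ ≫ ψ.c := by
      have h0 := pullback.condition (f := Abelian.factorThruImage V.g) (g := c'')
      have h2' := congrArg (· ≫ Abelian.image.ι V.g) h0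
      simp only [Category.assoc] at h2'
      rw [Abelian.image.fac] at h2'
      have hcι : c'' ≫ Abelian.image.ι V.g = ψ.c := kernel.lift_ι _ _ _
      rw [hp₁, hp₂, h2', hcι]
    have hecond : (p₂ ≫ s₀ - p₁ ≫ φ.b) ≫ W.g = 0 := by
      rw [Preadditive.sub_comp, Category.assoc, Category.assoc, ← h3, ← φ.comm₂,
        ← Category.assoc, ← Category.assoc, hpg, sub_self]
    set e : pullback (Abelian.factorThruImage V.g) c'' ⟶ kernel W.g :=
      kernel.lift W.g (p₂ ≫ s₀ - p₁ ≫ φ.b) hecond with he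
    set j : pullback (Abelian.factorThruImage V.g) c'' ⟶ V.B ⊞ kernel W.g :=
      biprod.lift p₁ e with hj
    -- the inclusion of V.A into the pullback
    have hιAcond : V.f ≫ Abelian.factorThruImage V.g = 0 ≫ c'' := by
      rw [← cancel_mono (Abelian.image.ι V.g), Category.assoc, Abelian.image.fac, V.w,
        zero_comp, zero_comp]
    set ιA : V.A ⟶ pullback (Abelian.factorThruImage V.g) c'' :=
      pullback.lift V.f 0 hιAcond with hιA
    have hιA1 : ιA ≫ p₁ = V.f := by rw [hιA, hp₁]; exact pullback.lift_fst _ _ _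
    have hιA2 : ιA ≫ p₂ = 0 := by rw [hιA, hp₂]; exact pullback.lift_snd _ _ _
    have he' : e ≫ kernel.ι W.g = p₂ ≫ s₀ - p₁ ≫ φ.b := kernel.lift_ι _ _ _
    have hk' : k ≫ kernel.ι W.g = V.f ≫ φ.b := kernel.lift_ι _ _ _
    have hℓ' : ℓ ≫ kernel.ι W.g = s₁ ≫ W.f := kernel.lift_ι _ _ _
    have hιAj : ιA ≫ j = biprod.lift V.f (-k) := by
      apply biprod.hom_ext
      · simp only [Category.assoc, hj, biprod.lift_fst, hιA1]
      · rw [← cancel_mono (kernel.ι W.g)]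
        simp only [Category.assoc, hj, biprod.lift_snd_assoc, biprod.lift_snd, he',
          Preadditive.comp_sub, Preadditive.neg_comp, Preadditive.comp_neg, hk',
          reassoc_of% hιA1, reassoc_of% hιA2, zero_comp, zero_sub]
    -- kernel of p₂ maps to zero under p₁ - ρ ≫ V.f
    have hκg : (kernel.ι p₂ ≫ p₁) ≫ V.g = 0 := by
      rw [Category.assoc, hpg, ← Category.assoc, kernel.condition, zero_comp]
    set a₂ : kernel p₂ ⟶ V.A := V.exact.lift (kernel.ι p₂ ≫ p₁) hκg with ha₂def
    have ha₂ : a₂ ≫ V.f = kernel.ι p₂ ≫ p₁ := V.exact.lift_f _ _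
    have hκj : kernel.ι p₂ ≫ j = a₂ ≫ biprod.lift V.f (-k) := by
      apply biprod.hom_ext
      · simp only [Category.assoc, hj, biprod.lift_fst, ha₂]
      · rw [← cancel_mono (kernel.ι W.g)]
        simp only [Category.assoc, hj, biprod.lift_snd_assoc, he', Preadditive.comp_sub,
          Preadditive.neg_comp, Preadditive.comp_neg, hk',
          reassoc_of% (kernel.condition p₂), zero_comp, zero_sub,
          ← reassoc_of% ha₂]
    have hκ0 : kernel.ι p₂ ≫ (p₁ - (j ≫ r) ≫ V.f) = 0 := by
      simp only [Preadditive.comp_sub, ← Category.assoc, hκj]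
      simp only [Category.assoc, reassoc_of% hr, Category.id_comp, ha₂, sub_self]
    set t₀ : U.Z ⟶ V.B := Abelian.epiDesc p₂ (p₁ - (j ≫ r) ≫ V.f) hκ0 with ht₀def
    have ht₀ : p₂ ≫ t₀ = p₁ - (j ≫ r) ≫ V.f := Abelian.comp_epiDesc _ _ _
    -- the comparison map from U.B
    have hhcond : (ψ.b - t₁ ≫ V.f) ≫ Abelian.factorThruImage V.g = U.g ≫ c'' := by
      rw [← cancel_mono (Abelian.image.ι V.g)]
      simp only [Category.assoc, Abelian.image.fac, hc'', kernel.lift_ι,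
        Preadditive.sub_comp, V.w, comp_zero, sub_zero, ψ.comm₂]
    set h : U.B ⟶ pullback (Abelian.factorThruImage V.g) c'' :=
      pullback.lift (ψ.b - t₁ ≫ V.f) U.g hhcond with hh
    have hh₁ : h ≫ p₁ = ψ.b - t₁ ≫ V.f := by rw [hh, hp₁]; exact pullback.lift_fst _ _ _
    have hh₂ : h ≫ p₂ = U.g := by rw [hh, hp₂]; exact pullback.lift_snd _ _ _
    have hhj : h ≫ j = q - t₁ ≫ biprod.lift V.f (-k) := by
      apply biprod.hom_ext
      · simp only [Category.assoc, hj, hq, biprod.lift_fst, hh₁, Preadditive.sub_comp]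
      · rw [← cancel_mono (kernel.ι W.g)]
        simp only [Category.assoc, hj, hq, biprod.lift_snd_assoc, he', Preadditive.comp_sub,
          Preadditive.sub_comp, Preadditive.neg_comp, Preadditive.comp_neg, hk', hℓ',
          reassoc_of% hh₁, reassoc_of% hh₂]
        rw [h2]
        abel
    have hhjr : (h ≫ j) ≫ r = 0 := by
      rw [hhj, Preadditive.sub_comp, Category.assoc, hr, Category.comp_id, ← ht₁def, sub_self]
    have hUg : U.g ≫ t₀ = ψ.b - t₁ ≫ V.f := by
      rw [← hh₂, Category.assoc, ht₀, Preadditive.comp_sub, hh₁]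
      simp only [← Category.assoc]
      rw [hhjr, zero_comp, sub_zero]
    have hcψ : t₀ ≫ V.g = ψ.c := by
      rw [← cancel_epi p₂, ← Category.assoc, ht₀, Preadditive.sub_comp, Category.assoc, V.w,
        comp_zero, sub_zero, hpg]
    refine (mkHom_eq_zero_iff ψ).mpr ⟨t₁, t₀, ht₁.symm, ?_, hcψ.symm⟩
    rw [hUg]
    abel
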